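/- Multiplication norm dominates the sup norm: Let ℰ : (0,∞) × ℝⁿ → ℂ be measurable and define ‖ℰ‖_* as the norm of pointwise multiplication by ℰ as a map from the space X := {f : Ñ*(f) ∈ L²(ℝⁿ)} (with norm ‖Ñ*(f)‖₂) to Y* := L²((0,∞) × ℝⁿ, dt dx / t). Then ‖ℰ‖_{L^∞} ≤ C ‖ℰ‖_* for a constant C depending only on n, c₀, c₁. -/

import Mathlib

open MeasureTheory Set ENNReal

/-- The squared `L²` norm of `f` over the Whitney region
`W(t,x) = (c₀⁻¹t, c₀t) × B(x, c₁t)`. -/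
noncomputable def whitneyL2sq (n : ℕ) (c₀ c₁ : ℝ)
    (f : ℝ → EuclideanSpace ℝ (Fin n) → ℂ) (t : ℝ) (x : EuclideanSpace ℝ (Fin n)) :
    ℝ≥0∞ :=
  ∫⁻ s in Ioo (c₀⁻¹ * t) (c₀ * t), ∫⁻ y in Metric.ball x (c₁ * t),
    (‖f s y‖₊ : ℝ≥0∞) ^ 2

/-- The modified non-tangential maximal function
`Ñ*(f)(x) = sup_{t>0} t^(−(1+n)/2) ‖f‖_{L²(W(t,x))}`. -/
noncomputable def ntMax (n : ℕ) (c₀ c₁ : ℝ) (f : ℝ → EuclideanSpace ℝ (Fin n) → ℂ)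
    (x : EuclideanSpace ℝ (Fin n)) : ℝ≥0∞ :=
  ⨆ t ∈ Ioi (0:ℝ),
    (ENNReal.ofReal t) ^ (-((1:ℝ) + n) / 2) * (whitneyL2sq n c₀ c₁ f t x) ^ ((1:ℝ) / 2)

/-!
Test the multiplier bound on `f = 𝟙_A`, where `A ⊆ (t₀, 2t₀] × B(x₀, t₀)` has positive measure
and `|ℰ| > λ` on `A`; for every `λ < ‖ℰ‖_∞` such an `A` exists, because the boxes
`(2ʲ, 2ʲ⁺¹] × B(q, 2ʲ)`, `q` in a countable dense set, cover `(0, ∞) × ℝⁿ`. On such an `f` both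
norms are comparable to `t₀^(-1/2) ‖f‖₂`. From below, `‖ℰ f‖²_{Y*} ≥ λ² |A| / (2t₀)`. From above, a
Whitney region `W(t, x)` meets `A` only if `t > t₀ / c₀` and `x ∈ B(x₀, (1 + 2c₀c₁) t₀)`, whence
`‖Ñ*(f)‖₂² ≤ c₀ⁿ⁺¹ |B(0, 1 + 2c₀c₁)| |A| / t₀`. Comparing gives
`λ² ≤ 2 c₀ⁿ⁺¹ |B(0, 1 + 2c₀c₁)| M²`.
-/

open Metric

lemma essSup_le_of_forall_measure_lt_ne_zero {α β : Type*} [MeasurableSpace α]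
    [CompleteLinearOrder β] [DenselyOrdered β] {μ : Measure α} {f : α → β} {c : β}
    (h : ∀ a, μ {x | a < f x} ≠ 0 → a ≤ c) : essSup f μ ≤ c := by
  refine le_of_forall_gt_imp_ge_of_dense fun a hca => ?_
  rw [essSup_eq_sInf]
  refine sInf_le ?_
  by_contra hμ
  exact (h a hμ).not_gt hca

lemma exists_measure_inter_Ioc_prod_ball_ne_zero {X : Type*} [PseudoMetricSpace X]
    [TopologicalSpace.SeparableSpace X] [MeasurableSpace X] {μ : Measure (ℝ × X)}
    {S : Set (ℝ × X)} (hS : μ (S ∩ Ioi 0 ×ˢ univ) ≠ 0) :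
    ∃ t₀ > 0, ∃ x₀ : X, μ (S ∩ Ioc t₀ (2 * t₀) ×ˢ ball x₀ t₀) ≠ 0 := by
  obtain ⟨D, hDc, hDd⟩ := TopologicalSpace.exists_countable_dense X
  by_contra! hnull
  refine hS (measure_mono_null (t := ⋃ j : ℤ, ⋃ q ∈ D,
    S ∩ Ioc ((2 : ℝ) ^ j) (2 * 2 ^ j) ×ˢ ball q (2 ^ j)) ?_ ?_)
  · rintro ⟨t, x⟩ ⟨hS, ht, -⟩
    obtain ⟨j, hj⟩ := exists_mem_Ioc_zpow (show 0 < t from ht) one_lt_two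
    obtain ⟨q, hqD, hq⟩ := hDd.exists_dist_lt x (zpow_pos two_pos j)
    rw [zpow_add_one₀ two_ne_zero, mul_comm] at hj
    exact mem_iUnion₂.2 ⟨j, q, mem_iUnion.2 ⟨hqD, hS, hj, hq⟩⟩
  · exact measure_iUnion_null fun j =>
      (measure_biUnion_null_iff hDc).2 fun q _ => hnull _ (zpow_pos two_pos j) q

lemma lt_and_mem_ball_of_mem_whitney {X : Type*} [PseudoMetricSpace X] {c₀ c₁ t t₀ s : ℝ}
    {x x₀ y : X} (hc₀ : 0 < c₀) (hc₁ : 0 ≤ c₁) (hs : s ∈ Ioo (c₀⁻¹ * t) (c₀ * t))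
    (hy : y ∈ ball x (c₁ * t)) (hs₀ : s ∈ Ioc t₀ (2 * t₀)) (hy₀ : y ∈ ball x₀ t₀) :
    t₀ / c₀ < t ∧ x ∈ ball x₀ (t₀ * (1 + 2 * c₀ * c₁)) := by
  have hts : t < c₀ * s := (inv_mul_lt_iff₀ hc₀).1 hs.1
  refine ⟨(div_lt_iff₀' hc₀).2 (hs₀.1.trans hs.2), ?_⟩
  have hct : c₁ * t ≤ c₁ * (c₀ * (2 * t₀)) :=
    mul_le_mul_of_nonneg_left (hts.le.trans (mul_le_mul_of_nonneg_left hs₀.2 hc₀.le)) hc₁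
  rw [mem_ball] at hy hy₀ ⊢
  calc dist x x₀ ≤ dist y x + dist y x₀ := dist_triangle_left x x₀ y
    _ < c₁ * t + t₀ := add_lt_add hy hy₀
    _ ≤ t₀ * (1 + 2 * c₀ * c₁) := by linarith

section NontangentialMaximal

variable {n : ℕ} {c₀ c₁ : ℝ}

lemma whitneyL2sq_le_lintegral_lintegral (f : ℝ → EuclideanSpace ℝ (Fin n) → ℂ) (t : ℝ)
    (x : EuclideanSpace ℝ (Fin n)) :
    whitneyL2sq n c₀ c₁ f t x ≤ ∫⁻ s, ∫⁻ y, (‖f s y‖₊ : ℝ≥0∞) ^ 2 :=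
  (lintegral_mono fun _ => setLIntegral_le_lintegral _ _).trans (setLIntegral_le_lintegral _ _)

lemma exists_ne_zero_of_whitneyL2sq_ne_zero {f : ℝ → EuclideanSpace ℝ (Fin n) → ℂ} {t : ℝ}
    {x : EuclideanSpace ℝ (Fin n)} (h : whitneyL2sq n c₀ c₁ f t x ≠ 0) :
    ∃ s ∈ Ioo (c₀⁻¹ * t) (c₀ * t), ∃ y ∈ ball x (c₁ * t), f s y ≠ 0 := by
  by_contra! hzero
  refine h (((setLIntegral_congr_fun measurableSet_Ioo fun s hs => ?_).trans lintegral_zero))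
  refine (setLIntegral_congr_fun measurableSet_ball fun y hy => ?_).trans lintegral_zero
  simp [hzero s hs y hy]

lemma ntMax_le_indicator_of_support_subset (hc₀ : 0 < c₀) (hc₁ : 0 ≤ c₁) {t₀ : ℝ}
    (ht₀ : 0 < t₀) {x₀ : EuclideanSpace ℝ (Fin n)} {f : ℝ → EuclideanSpace ℝ (Fin n) → ℂ}
    (hf : Function.support (Function.uncurry f) ⊆ Ioc t₀ (2 * t₀) ×ˢ ball x₀ t₀)
    (x : EuclideanSpace ℝ (Fin n)) :
    ntMax n c₀ c₁ f x ≤ (ball x₀ (t₀ * (1 + 2 * c₀ * c₁))).indicator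
      (fun _ => ENNReal.ofReal ((t₀ / c₀) ^ (-((1:ℝ) + n) / 2)) *
        (∫⁻ s, ∫⁻ y, (‖f s y‖₊ : ℝ≥0∞) ^ 2) ^ ((1:ℝ) / 2)) x := by
  refine iSup₂_le fun t (ht : 0 < t) => ?_
  by_cases hW : whitneyL2sq n c₀ c₁ f t x = 0
  · simp [hW]
  obtain ⟨s, hs, y, hy, hfsy⟩ := exists_ne_zero_of_whitneyL2sq_ne_zero hW
  have hbox : (s, y) ∈ Ioc t₀ (2 * t₀) ×ˢ ball x₀ t₀ := hf hfsy
  obtain ⟨htt₀, hx⟩ := lt_and_mem_ball_of_mem_whitney hc₀ hc₁ hs hy hbox.1 hbox.2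
  rw [indicator_of_mem hx, ENNReal.ofReal_rpow_of_pos ht]
  exact mul_le_mul' (ENNReal.ofReal_le_ofReal
    (Real.rpow_le_rpow_of_nonpos (by positivity) htt₀.le
      (by have : (0:ℝ) ≤ n := n.cast_nonneg; linarith)))
    (ENNReal.rpow_le_rpow (whitneyL2sq_le_lintegral_lintegral f t x) (by norm_num))

lemma lintegral_ntMax_sq_le_of_support_subset (hc₀ : 0 < c₀) (hc₁ : 0 ≤ c₁) {t₀ : ℝ}
    (ht₀ : 0 < t₀) {x₀ : EuclideanSpace ℝ (Fin n)} {f : ℝ → EuclideanSpace ℝ (Fin n) → ℂ}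
    (hf : Function.support (Function.uncurry f) ⊆ Ioc t₀ (2 * t₀) ×ˢ ball x₀ t₀) :
    ∫⁻ x, ntMax n c₀ c₁ f x ^ 2 ≤
      ENNReal.ofReal (c₀ ^ (n + 1) / t₀) *
        volume (ball (0 : EuclideanSpace ℝ (Fin n)) (1 + 2 * c₀ * c₁)) *
        ∫⁻ s, ∫⁻ y, (‖f s y‖₊ : ℝ≥0∞) ^ 2 := by
  set I := ∫⁻ s, ∫⁻ y, (‖f s y‖₊ : ℝ≥0∞) ^ 2
  set R := ENNReal.ofReal ((t₀ / c₀) ^ (-((1:ℝ) + n) / 2)) * I ^ ((1:ℝ) / 2)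
  have hR : R ^ 2 = ENNReal.ofReal ((t₀ / c₀) ^ (-((1:ℝ) + n))) * I := by
    rw [mul_pow, ← ENNReal.ofReal_pow (by positivity), ← Real.rpow_mul_natCast (by positivity),
      ← ENNReal.rpow_mul_natCast]
    norm_num
  have hscale : (t₀ / c₀) ^ (-((1:ℝ) + n)) * t₀ ^ n = c₀ ^ (n + 1) / t₀ := by
    rw [Real.rpow_neg (by positivity), show (1:ℝ) + n = ((n + 1 : ℕ) : ℝ) by push_cast; ring,
      Real.rpow_natCast, div_pow, inv_div, pow_succ t₀]
    field_simp
  calc ∫⁻ x, ntMax n c₀ c₁ f x ^ 2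
      ≤ ∫⁻ x, (ball x₀ (t₀ * (1 + 2 * c₀ * c₁))).indicator (fun _ => R ^ 2) x := by
        refine lintegral_mono fun x => (pow_le_pow_left₀ zero_le
          (ntMax_le_indicator_of_support_subset hc₀ hc₁ ht₀ hf x) 2).trans_eq ?_
        by_cases hx : x ∈ ball x₀ (t₀ * (1 + 2 * c₀ * c₁)) <;> simp [hx, R, I]
    _ = R ^ 2 * volume (ball x₀ (t₀ * (1 + 2 * c₀ * c₁))) := by
        rw [lintegral_indicator_const measurableSet_ball]
    _ = ENNReal.ofReal (c₀ ^ (n + 1) / t₀) *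
          volume (ball (0 : EuclideanSpace ℝ (Fin n)) (1 + 2 * c₀ * c₁)) * I := by
        rw [hR, Measure.addHaar_ball_mul_of_pos volume x₀ ht₀, finrank_euclideanSpace_fin,
          ← hscale, ENNReal.ofReal_mul (by positivity)]
        ring

end NontangentialMaximal

section TestFunction

variable {X : Type*} [MeasureSpace X] [SFinite (volume : Measure X)] {A : Set (ℝ × X)}

lemma lintegral_lintegral_nnnorm_indicator_one_sq (hA : MeasurableSet A) :
    ∫⁻ s, ∫⁻ y, (‖A.indicator (fun _ => (1 : ℂ)) (s, y)‖₊ : ℝ≥0∞) ^ 2 =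
      volume.prod volume A := by
  have hsq : ∀ p, (‖A.indicator (fun _ => (1 : ℂ)) p‖₊ : ℝ≥0∞) ^ 2 = A.indicator 1 p := by
    intro p
    by_cases hp : p ∈ A <;> simp [hp]
  simp only [hsq]
  rw [← lintegral_prod _ (measurable_one.indicator hA).aemeasurable, lintegral_indicator_one hA]

lemma mul_measure_le_lintegral_mul_indicator (E : ℝ → X → ℂ) (hA : MeasurableSet A) {T : ℝ}
    (hAT : A ⊆ Ioc 0 T ×ˢ univ) {lam : ℝ≥0∞}
    (hlam : ∀ p ∈ A, lam < (‖E p.1 p.2‖₊ : ℝ≥0∞)) :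
    lam ^ 2 * (ENNReal.ofReal T)⁻¹ * volume.prod volume A ≤
      ∫⁻ t in Ioi (0:ℝ), (∫⁻ x, (‖E t x * A.indicator (fun _ => (1 : ℂ)) (t, x)‖₊ : ℝ≥0∞) ^ 2) *
        (ENNReal.ofReal t)⁻¹ := by
  set c := lam ^ 2 * (ENNReal.ofReal T)⁻¹
  have hA_restrict : (volume.restrict (Ioi (0:ℝ))).prod volume A = volume.prod volume A := by
    rw [Measure.restrict_prod_eq_prod_univ, Measure.restrict_apply hA,
      inter_eq_self_of_subset_left (hAT.trans (prod_mono Ioc_subset_Ioi_self subset_rfl))]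
  calc c * volume.prod volume A
      = ∫⁻ t in Ioi (0:ℝ), ∫⁻ x, A.indicator (fun _ => c) (t, x) := by
        rw [← lintegral_prod _ (measurable_const.indicator hA).aemeasurable,
          lintegral_indicator_const hA, hA_restrict]
    _ ≤ ∫⁻ t in Ioi (0:ℝ), ∫⁻ x,
          (‖E t x * A.indicator (fun _ => (1 : ℂ)) (t, x)‖₊ : ℝ≥0∞) ^ 2 * (ENNReal.ofReal t)⁻¹ := by
        refine lintegral_mono fun t => lintegral_mono fun x => ?_
        by_cases hp : (t, x) ∈ A
        · rw [indicator_of_mem hp, indicator_of_mem hp, mul_one]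
          exact mul_le_mul' (pow_le_pow_left₀ zero_le (hlam _ hp).le 2)
            (ENNReal.inv_le_inv.2 (ENNReal.ofReal_le_ofReal (hAT hp).1.2))
        · simp [hp]
    _ = _ := setLIntegral_congr_fun measurableSet_Ioi fun t ht =>
        lintegral_mul_const' _ _ (ENNReal.inv_ne_top.2 (ENNReal.ofReal_pos.2 ht).ne')

end TestFunction

lemma sq_le_of_lintegral_mul_indicator_le {n : ℕ} {c₀ c₁ : ℝ} (hc₀ : 0 < c₀) (hc₁ : 0 ≤ c₁)
    {E : ℝ → EuclideanSpace ℝ (Fin n) → ℂ} {M lam : ℝ≥0∞} {t₀ : ℝ} (ht₀ : 0 < t₀)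
    {x₀ : EuclideanSpace ℝ (Fin n)} {A : Set (ℝ × EuclideanSpace ℝ (Fin n))}
    (hA : MeasurableSet A) (hAbox : A ⊆ Ioc t₀ (2 * t₀) ×ˢ ball x₀ t₀)
    (hA0 : volume.prod volume A ≠ 0) (hlam : ∀ p ∈ A, lam < (‖E p.1 p.2‖₊ : ℝ≥0∞))
    (hM : ∫⁻ t in Ioi (0:ℝ),
        (∫⁻ x, (‖E t x * A.indicator (fun _ => (1 : ℂ)) (t, x)‖₊ : ℝ≥0∞) ^ 2) *
          (ENNReal.ofReal t)⁻¹ ≤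
        M ^ 2 * ∫⁻ x, ntMax n c₀ c₁ (fun t x => A.indicator (fun _ => (1 : ℂ)) (t, x)) x ^ 2) :
    lam ^ 2 ≤ ENNReal.ofReal (2 * c₀ ^ (n + 1)) *
      volume (ball (0 : EuclideanSpace ℝ (Fin n)) (1 + 2 * c₀ * c₁)) * M ^ 2 := by
  set V := volume (ball (0 : EuclideanSpace ℝ (Fin n)) (1 + 2 * c₀ * c₁))
  set a := volume.prod volume A
  have hAtop : a ≠ ⊤ := by
    refine ne_top_of_le_ne_top ?_ (measure_mono hAbox)
    rw [Measure.prod_prod]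
    exact ENNReal.mul_ne_top measure_Ioc_lt_top.ne measure_ball_lt_top.ne
  have hlower := mul_measure_le_lintegral_mul_indicator E hA
    (hAbox.trans (prod_mono (Ioc_subset_Ioc_left ht₀.le) (subset_univ _))) hlam
  have hupper := lintegral_ntMax_sq_le_of_support_subset hc₀ hc₁ ht₀
    (f := fun t x => A.indicator (fun _ => (1 : ℂ)) (t, x))
    ((support_indicator_subset).trans hAbox)
  rw [lintegral_lintegral_nnnorm_indicator_one_sq hA] at hupper
  have hcancel : lam ^ 2 * (ENNReal.ofReal (2 * t₀))⁻¹ * a ≤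
      M ^ 2 * ENNReal.ofReal (c₀ ^ (n + 1) / t₀) * V * a := by
    calc _ ≤ _ := hlower.trans hM
      _ ≤ M ^ 2 * (ENNReal.ofReal (c₀ ^ (n + 1) / t₀) * V * a) := by gcongr
      _ = _ := by ring
  rw [ENNReal.mul_le_mul_iff_left hA0 hAtop, ← div_eq_mul_inv,
    ENNReal.div_le_iff (by simpa using ht₀) ENNReal.ofReal_ne_top] at hcancel
  calc lam ^ 2 ≤ M ^ 2 * ENNReal.ofReal (c₀ ^ (n + 1) / t₀) * V * ENNReal.ofReal (2 * t₀) :=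
        hcancel
    _ = M ^ 2 * V * (ENNReal.ofReal (c₀ ^ (n + 1) / t₀) * ENNReal.ofReal (2 * t₀)) := by ring
    _ = ENNReal.ofReal (2 * c₀ ^ (n + 1)) * V * M ^ 2 := by
        rw [← ENNReal.ofReal_mul (by positivity),
          show c₀ ^ (n + 1) / t₀ * (2 * t₀) = 2 * c₀ ^ (n + 1) by field_simp]
        ring

theorem stmt_13 (n : ℕ) (c₀ c₁ : ℝ) (hc₀ : 1 < c₀) (hc₁ : 0 < c₁) :
    ∃ C : ℝ≥0∞, C ≠ ⊤ ∧ ∀ E : ℝ → EuclideanSpace ℝ (Fin n) → ℂ,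
      Measurable (Function.uncurry E) → ∀ M : ℝ≥0∞,
      (∀ f : ℝ → EuclideanSpace ℝ (Fin n) → ℂ, Measurable (Function.uncurry f) →
        (∫⁻ t in Ioi (0:ℝ),
            (∫⁻ x, (‖E t x * f t x‖₊ : ℝ≥0∞) ^ 2) * (ENNReal.ofReal t)⁻¹) ≤
          M ^ 2 * ∫⁻ x, (ntMax n c₀ c₁ f x) ^ 2) →
      essSup (fun p : ℝ × EuclideanSpace ℝ (Fin n) => (‖E p.1 p.2‖₊ : ℝ≥0∞))
          ((volume.restrict (Ioi (0:ℝ))).prod volume) ≤ C * M := by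
  set K := ENNReal.ofReal (2 * c₀ ^ (n + 1)) *
    volume (ball (0 : EuclideanSpace ℝ (Fin n)) (1 + 2 * c₀ * c₁))
  have hK : K ≠ ⊤ := ENNReal.mul_ne_top ENNReal.ofReal_ne_top measure_ball_lt_top.ne
  refine ⟨K ^ (2⁻¹ : ℝ), ENNReal.rpow_ne_top_of_nonneg (by norm_num) hK, fun E hE M hM => ?_⟩
  refine essSup_le_of_forall_measure_lt_ne_zero fun lam hlam => ?_
  set S := {p : ℝ × EuclideanSpace ℝ (Fin n) | lam < (‖E p.1 p.2‖₊ : ℝ≥0∞)}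
  have hS : MeasurableSet S := measurableSet_lt measurable_const hE.nnnorm.coe_nnreal_ennreal
  rw [Measure.restrict_prod_eq_prod_univ, Measure.restrict_apply hS] at hlam
  obtain ⟨t₀, ht₀, x₀, hbox⟩ := exists_measure_inter_Ioc_prod_ball_ne_zero hlam
  have hA : MeasurableSet (S ∩ Ioc t₀ (2 * t₀) ×ˢ ball x₀ t₀) :=
    hS.inter (measurableSet_Ioc.prod measurableSet_ball)
  have hsq := sq_le_of_lintegral_mul_indicator_le (zero_lt_one.trans hc₀) hc₁.le ht₀ hA
    inter_subset_right hbox (fun p hp => hp.1) (hM _ (measurable_const.indicator hA))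
  rwa [← ENNReal.pow_le_pow_left_iff two_ne_zero, mul_pow, ← ENNReal.rpow_two (K ^ _),
    ENNReal.rpow_inv_rpow two_ne_zero]
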